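/- arXiv:1103.2918 — 3 statements merged into one kernel-verified Lean document; each statement's English description precedes it below -/
import Mathlib

section
/- Let T : C[0,1] → C[0,1] be a positive linear operator with T(e₀) = e₀ and T(e₁) ≤ e₁ (pointwise on [0,1]), and assume that the iterates T^m(e₁) and T^m(e₂) both converge uniformly on [0,1] to the zero function. Then for every f ∈ C[0,1] the iterates T^m(f) converge uniformly on [0,1] to the constant function f(0), and for every f ∈ C[0,1], every x ∈ [0,1] and every m ∈ ℕ one has |f(0) − T^m(f;x)| ≤ 3·ω₂(f; |T^m(e₁;x)|) + 2·ω₁(f; |T^m(e₁;x)|) + (3/4)·ω₂(f; √(|T^m(e₂;x)| + 2|T^m(e₁;x)|)). -/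
open Filter

noncomputable section

/-- The unit interval `[0,1]` as a subset of `ℝ`. -/
abbrev I01 : Set ℝ := Set.Icc 0 1

/-- The space `C[0,1]` of continuous real-valued functions on `[0,1]`. -/
abbrev CI := C(I01, ℝ)

/-- The monomial `e i : x ↦ x ^ i`. -/
def e (i : ℕ) : CI := ⟨fun x => (x : ℝ) ^ i, (continuous_subtype_val).pow i⟩

/-- A linear operator on `C[0,1]` is positive if it maps nonnegative functions to
nonnegative functions. -/
def IsPositive (T : CI →ₗ[ℝ] CI) : Prop :=
  ∀ f : CI, (∀ x, 0 ≤ f x) → ∀ x, 0 ≤ T f x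

/-- The `m`-th iterate of `T`. -/
def iter (T : CI →ₗ[ℝ] CI) : ℕ → (CI →ₗ[ℝ] CI)
  | 0 => LinearMap.id
  | m + 1 => T ∘ₗ iter T m

/-- First modulus of smoothness (modulus of continuity). -/
def omega1 (f : CI) (δ : ℝ) : ℝ :=
  sSup {v : ℝ | ∃ (x h : ℝ) (hx : x ∈ I01) (hxh : x + h ∈ I01),
    0 ≤ h ∧ h ≤ δ ∧ v = |f ⟨x + h, hxh⟩ - f ⟨x, hx⟩|}

/-- Second modulus of smoothness. -/
def omega2 (f : CI) (δ : ℝ) : ℝ :=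
  sSup {v : ℝ | ∃ (x h : ℝ) (hx : x ∈ I01) (hxp : x + h ∈ I01) (hxm : x - h ∈ I01),
    0 ≤ h ∧ h ≤ δ ∧ v = |f ⟨x + h, hxp⟩ - 2 * f ⟨x, hx⟩ + f ⟨x - h, hxm⟩|}

/-!
Chaining steps of length at most `δ` from `0` to `t` gives `|f t - f 0| ≤ (1 + t / δ) ω₁(f; δ)`,
so `f` lies between the affine functions `f 0 ± (ω₁(f; δ) e₀ + (ω₁(f; δ) / δ) e₁)`. A positive
operator `L` with `L e₀ = e₀` preserves this sandwich, whence
`|f 0 - L f x| ≤ (1 + L e₁ x / δ) ω₁(f; δ)`. Taking `δ = L e₁ x` bounds the error by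
`2 ω₁(f; L e₁ x)`, which is dominated by the stated estimate as `ω₂ ≥ 0`; taking `δ` small and
`L = T^m` with `T^m e₁ → 0` uniformly gives the uniform convergence.
-/

@[simp] lemma e_zero_apply (t : I01) : e 0 t = 1 := pow_zero _

@[simp] lemma e_one_apply (t : I01) : e 1 t = t := pow_one _

lemma omega1_nonneg (f : CI) (δ : ℝ) : 0 ≤ omega1 f δ :=
  Real.sSup_nonneg fun _ ⟨_, _, _, _, _, _, hv⟩ => hv ▸ abs_nonneg _

lemma omega2_nonneg (f : CI) (δ : ℝ) : 0 ≤ omega2 f δ :=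
  Real.sSup_nonneg fun _ ⟨_, _, _, _, _, _, _, hv⟩ => hv ▸ abs_nonneg _

lemma abs_sub_le_omega1 (f : CI) {δ : ℝ} {s t : I01} (hst : (s : ℝ) ≤ t)
    (hts : (t : ℝ) ≤ s + δ) : |f t - f s| ≤ omega1 f δ := by
  have hbdd : BddAbove {v : ℝ | ∃ (x h : ℝ) (hx : x ∈ I01) (hxh : x + h ∈ I01),
      0 ≤ h ∧ h ≤ δ ∧ v = |f ⟨x + h, hxh⟩ - f ⟨x, hx⟩|} := by
    refine (isCompact_range (f := fun p : I01 × I01 => |f p.1 - f p.2|)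
      (by fun_prop)).bddAbove.mono ?_
    rintro _ ⟨x, h, hx, hxh, -, -, rfl⟩
    exact ⟨(⟨x + h, hxh⟩, ⟨x, hx⟩), rfl⟩
  exact le_csSup hbdd ⟨s, t - s, s.2, by simp, by linarith, by linarith, by simp⟩

lemma exists_omega1_le (f : CI) {ε : ℝ} (hε : 0 < ε) : ∃ δ > 0, omega1 f δ ≤ ε := by
  obtain ⟨δ, hδ, H⟩ := Metric.uniformContinuous_iff.mp
    (CompactSpace.uniformContinuous_of_continuous f.continuous) ε hε
  refine ⟨δ / 2, by positivity, Real.sSup_le ?_ hε.le⟩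
  rintro _ ⟨x, h, hx, hxh, hh0, hhδ, rfl⟩
  have hdist : dist (⟨x + h, hxh⟩ : I01) ⟨x, hx⟩ < δ := by
    rw [Subtype.dist_eq, Real.dist_eq, add_sub_cancel_left, abs_of_nonneg hh0]
    linarith
  exact (H hdist).le

lemma abs_sub_apply_zero_le_nat_mul_omega1 (f : CI) {δ : ℝ} (n : ℕ) (t : I01)
    (ht : (t : ℝ) ≤ n * δ) : |f t - f ⟨0, by norm_num⟩| ≤ n * omega1 f δ := by
  induction n generalizing t with
  | zero =>
    have : t = ⟨0, by norm_num⟩ := Subtype.ext (le_antisymm (by simpa using ht) t.2.1)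
    simp [this]
  | succ n ih =>
    push_cast at ht ⊢
    have hω := omega1_nonneg f δ
    by_cases htδ : (t : ℝ) ≤ δ
    · have := abs_sub_le_omega1 f (s := ⟨0, by norm_num⟩) t.2.1 (by simpa using htδ)
      nlinarith [n.cast_nonneg (α := ℝ)]
    · have hδ : 0 ≤ δ := by nlinarith [t.2.1]
      let t' : I01 := ⟨t - δ, by constructor <;> linarith [t.2.2]⟩
      have hstep := abs_sub_le_omega1 f (δ := δ) (s := t') (t := t) (by simp [t']; linarith)
        (by simp [t'])
      have hchain := ih t' (by simp [t']; linarith)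
      linarith [abs_sub_le (f t) (f t') (f ⟨0, by norm_num⟩)]

lemma abs_sub_apply_zero_le (f : CI) {δ : ℝ} (hδ : 0 < δ) (t : I01) :
    |f t - f ⟨0, by norm_num⟩| ≤ (1 + t / δ) * omega1 f δ := by
  have hceil : (t : ℝ) ≤ ⌈(t : ℝ) / δ⌉₊ * δ := (div_le_iff₀ hδ).1 (Nat.le_ceil _)
  have hω := omega1_nonneg f δ
  calc |f t - f ⟨0, by norm_num⟩| ≤ ⌈(t : ℝ) / δ⌉₊ * omega1 f δ :=
        abs_sub_apply_zero_le_nat_mul_omega1 f _ t hceil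
    _ ≤ (1 + t / δ) * omega1 f δ := by
        gcongr
        linarith [Nat.ceil_lt_add_one (div_nonneg t.2.1 hδ.le)]

section Positive

variable {L : CI →ₗ[ℝ] CI}

lemma isPositive_iter {T : CI →ₗ[ℝ] CI} (hT : IsPositive T) : ∀ m, IsPositive (iter T m)
  | 0 => fun f hf x => by simpa [iter] using hf x
  | m + 1 => fun f hf x => by simpa [iter] using hT _ (isPositive_iter hT m f hf) x

lemma iter_e_zero {T : CI →ₗ[ℝ] CI} (h0 : T (e 0) = e 0) : ∀ m, iter T m (e 0) = e 0
  | 0 => rfl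
  | m + 1 => by simp [iter, iter_e_zero h0 m, h0]

lemma IsPositive.mono (hL : IsPositive L) {g h : CI} (hgh : ∀ t, g t ≤ h t) (x : I01) :
    L g x ≤ L h x := by
  simpa using hL (h - g) (fun t => by simpa using hgh t) x

lemma IsPositive.abs_apply_le (hL : IsPositive L) {u v : CI} (huv : ∀ t, |u t| ≤ v t)
    (x : I01) : |L u x| ≤ L v x := by
  refine abs_le'.2 ⟨hL.mono (fun t => (le_abs_self _).trans (huv t)) x, ?_⟩
  simpa using hL.mono (g := -u) (fun t => (neg_le_abs (u t)).trans (huv t)) x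

lemma IsPositive.apply_e_one_nonneg (hL : IsPositive L) (x : I01) : 0 ≤ L (e 1) x :=
  hL _ (fun t => by simpa using t.2.1) x

lemma IsPositive.abs_apply_zero_sub_le (hL : IsPositive L) (hL0 : L (e 0) = e 0) (f : CI)
    (x : I01) {δ : ℝ} (hδ : 0 < δ) :
    |f ⟨0, by norm_num⟩ - L f x| ≤ (1 + L (e 1) x / δ) * omega1 f δ := by
  set c := f ⟨0, by norm_num⟩
  set a := omega1 f δ
  have hsandwich : ∀ t, |(f - c • e 0) t| ≤ (a • e 0 + (a / δ) • e 1) t := fun t => by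
    simp only [ContinuousMap.sub_apply, ContinuousMap.add_apply, ContinuousMap.smul_apply,
      smul_eq_mul, e_zero_apply, e_one_apply, mul_one]
    calc |f t - c| ≤ (1 + t / δ) * a := abs_sub_apply_zero_le f hδ t
      _ = a + a / δ * t := by ring
  have := hL.abs_apply_le hsandwich x
  simp only [map_sub, map_add, map_smul, hL0, ContinuousMap.sub_apply, ContinuousMap.add_apply,
    ContinuousMap.smul_apply, smul_eq_mul, e_zero_apply, mul_one] at this
  rw [abs_sub_comm]
  calc |L f x - c| ≤ a + a / δ * L (e 1) x := this
    _ = (1 + L (e 1) x / δ) * a := by ring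

lemma IsPositive.abs_apply_zero_sub_le_two_mul_omega1 (hL : IsPositive L) (hL0 : L (e 0) = e 0)
    (f : CI) (x : I01) : |f ⟨0, by norm_num⟩ - L f x| ≤ 2 * omega1 f (L (e 1) x) := by
  rcases (hL.apply_e_one_nonneg x).eq_or_lt with hs | hs
  · refine le_of_forall_pos_le_add fun ε hε => ?_
    obtain ⟨δ, hδ, hωδ⟩ := exists_omega1_le f hε
    have := hL.abs_apply_zero_sub_le hL0 f x hδ
    rw [← hs, zero_div, add_zero, one_mul] at this
    linarith [omega1_nonneg f (L (e 1) x)]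
  · have := hL.abs_apply_zero_sub_le hL0 f x hs
    rwa [div_self hs.ne', one_add_one_eq_two] at this

end Positive

lemma tendstoUniformly_apply_zero {ι : Type*} {l : Filter ι} {L : ι → CI →ₗ[ℝ] CI}
    (hL : ∀ i, IsPositive (L i)) (hL0 : ∀ i, L i (e 0) = e 0)
    (hL1 : TendstoUniformly (fun i x => L i (e 1) x) (fun _ => (0 : ℝ)) l) (f : CI) :
    TendstoUniformly (fun i x => L i f x) (fun _ => f ⟨0, by norm_num⟩) l := by
  refine Metric.tendstoUniformly_iff.2 fun ε hε => ?_
  obtain ⟨δ, hδ, hωδ⟩ := exists_omega1_le f (show 0 < ε / 3 by positivity)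
  filter_upwards [Metric.tendstoUniformly_iff.1 hL1 δ hδ] with i hi x
  have hsδ : L i (e 1) x < δ := by
    simpa [Real.dist_eq, abs_of_nonneg ((hL i).apply_e_one_nonneg x)] using hi x
  have hfrac : L i (e 1) x / δ ≤ 1 := (div_le_one hδ).2 hsδ.le
  have hω := omega1_nonneg f δ
  rw [Real.dist_eq]
  calc |f ⟨0, by norm_num⟩ - L i f x| ≤ (1 + L i (e 1) x / δ) * omega1 f δ :=
        (hL i).abs_apply_zero_sub_le (hL0 i) f x hδ
    _ ≤ 2 * (ε / 3) := by gcongr; linarith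
    _ < ε := by linarith

theorem stmt7 (T : CI →ₗ[ℝ] CI) (hpos : IsPositive T)
    (h0 : T (e 0) = e 0)
    (hconv1 : TendstoUniformly (fun m x => iter T m (e 1) x) (fun _ => (0 : ℝ)) atTop) :
    (∀ f : CI, TendstoUniformly (fun m x => iter T m f x)
        (fun _ => f ⟨0, by norm_num⟩) atTop) ∧
    (∀ f : CI, ∀ x : I01, ∀ m : ℕ,
      |f ⟨0, by norm_num⟩ - iter T m f x| ≤
        3 * omega2 f |iter T m (e 1) x|
        + 2 * omega1 f |iter T m (e 1) x|
        + (3 / 4) * omega2 f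
            (Real.sqrt (|iter T m (e 2) x| + 2 * |iter T m (e 1) x|))) := by
  refine ⟨tendstoUniformly_apply_zero (isPositive_iter hpos) (iter_e_zero h0) hconv1,
    fun f x m => ?_⟩
  have hm := isPositive_iter hpos m
  rw [abs_of_nonneg (hm.apply_e_one_nonneg x)]
  linarith [hm.abs_apply_zero_sub_le_two_mul_omega1 (iter_e_zero h0 m) f x,
    omega2_nonneg f (iter T m (e 1) x),
    omega2_nonneg f (Real.sqrt (|iter T m (e 2) x| + 2 * iter T m (e 1) x))]
end
end

section
/- Let T : C[0,1] → C[0,1] be a positive linear operator with T(e₀) = e₀ and T(e₁) ≥ e₁ (pointwise on [0,1]), and let g ∈ C[0,1] be twice continuously differentiable on [0,1], nondecreasing and convex. Then for every x ∈ [0,1] and every m ∈ ℕ one has g(x) ≤ T^m(g;x) ≤ T^{m+1}(g;x) ≤ ‖g‖; in particular the sequence of functions (T^m(g))_m is pointwise nondecreasing and uniformly bounded by ‖g‖. -/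
open Filter Topology

noncomputable section

lemma nebot_aux {x : ℝ} (hx : x ∈ I01) : (𝓝[I01 \ {x}] x).NeBot := by
  rcases lt_or_eq_of_le hx.2 with h | h
  · have h1 : (𝓝[Set.Ioo x 1] x).NeBot := by
      rw [← mem_closure_iff_nhdsWithin_neBot, closure_Ioo h.ne]
      exact ⟨le_refl x, h.le⟩
    exact h1.mono (nhdsWithin_mono _ (fun y hy =>
      ⟨⟨le_trans hx.1 hy.1.le, hy.2.le⟩, ne_of_gt hy.1⟩))
  · have h0 : (0:ℝ) < x := by rw [h]; norm_num
    have h1 : (𝓝[Set.Ioo 0 x] x).NeBot := by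
      rw [← mem_closure_iff_nhdsWithin_neBot, closure_Ioo h0.ne]
      exact ⟨h0.le, le_refl x⟩
    exact h1.mono (nhdsWithin_mono _ (fun y hy =>
      ⟨⟨hy.1.le, le_trans hy.2.le hx.2⟩, ne_of_lt hy.2⟩))

lemma subgrad (g : ℝ → ℝ) (hg : ContDiffOn ℝ 2 g I01) (hmono : MonotoneOn g I01)
    (hconvex : ConvexOn ℝ I01 g) {x : ℝ} (hx : x ∈ I01) :
    ∃ c : ℝ, 0 ≤ c ∧ ∀ y ∈ I01, g x + c * (y - x) ≤ g y := by
  have hd : DifferentiableOn ℝ g I01 := hg.differentiableOn (by norm_num)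
  set c := derivWithin g I01 x with hc
  have hder : HasDerivWithinAt g c I01 x := (hd x hx).hasDerivWithinAt
  have htend : Tendsto (slope g x) (𝓝[I01 \ {x}] x) (𝓝 c) :=
    hasDerivWithinAt_iff_tendsto_slope.mp hder
  haveI := nebot_aux hx
  have hsm : MonotoneOn (slope g x) (I01 \ {x}) := hconvex.slope_mono hx
  have hslope_nonneg : ∀ z ∈ I01 \ {x}, 0 ≤ slope g x z := by
    intro z hz
    rw [slope_def_field]
    rcases lt_or_gt_of_ne (Ne.symm hz.2) with hlt | hgt
    · -- x < z
      exact div_nonneg (by linarith [hmono hx hz.1 hlt.le]) (by linarith)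
    · -- z < x
      apply div_nonneg_of_nonpos (by linarith [hmono hz.1 hx hgt.le]) (by linarith)
  have hc0 : 0 ≤ c :=
    ge_of_tendsto htend (eventually_mem_nhdsWithin.mono (fun z hz => hslope_nonneg z hz))
  refine ⟨c, hc0, fun y hy => ?_⟩
  rcases lt_trichotomy y x with hlt | heq | hgt
  · -- y < x : slope g x y ≤ c
    have hsl : slope g x y ≤ c := by
      apply ge_of_tendsto htend
      filter_upwards [eventually_mem_nhdsWithin,
        eventually_nhdsWithin_of_eventually_nhds (eventually_ge_nhds hlt)] with z hz hzy
      exact hsm ⟨hy, ne_of_lt hlt⟩ hz hzy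
    rw [slope_def_field] at hsl
    have hxy : y - x < 0 := by linarith
    have := (div_le_iff_of_neg hxy).mp hsl
    nlinarith
  · simp [heq]
  · -- x < y : c ≤ slope g x y
    have hsl : c ≤ slope g x y := by
      apply le_of_tendsto htend
      filter_upwards [eventually_mem_nhdsWithin,
        eventually_nhdsWithin_of_eventually_nhds (eventually_le_nhds hgt)] with z hz hzy
      exact hsm hz ⟨hy, ne_of_gt hgt⟩ hzy
    rw [slope_def_field] at hsl
    have hxy : (0:ℝ) < y - x := by linarith
    have := (le_div_iff₀ hxy).mp hsl
    nlinarith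

theorem stmt9 (T : CI →ₗ[ℝ] CI) (hpos : IsPositive T)
    (h0 : T (e 0) = e 0) (h1 : ∀ x : I01, e 1 x ≤ T (e 1) x)
    (g : ℝ → ℝ) (G : CI) (hGg : ∀ x : I01, G x = g x)
    (hg : ContDiffOn ℝ 2 g I01)
    (hmono : MonotoneOn g I01) (hconvex : ConvexOn ℝ I01 g) :
    ∀ x : I01, ∀ m : ℕ,
      g x ≤ iter T m G x ∧ iter T m G x ≤ iter T (m + 1) G x ∧
        iter T (m + 1) G x ≤ ‖G‖ := by
  -- monotonicity of T
  have Tmono : ∀ f h : CI, (∀ x, f x ≤ h x) → ∀ x, T f x ≤ T h x := by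
    intro f h hfh x
    have := hpos (h - f) (fun y => by simpa using sub_nonneg.mpr (hfh y)) x
    rw [map_sub] at this
    simpa using sub_nonneg.mp (by simpa using this)
  -- key: G ≤ T G pointwise
  have key : ∀ x : I01, G x ≤ T G x := by
    intro x
    obtain ⟨c, hc0, hsub⟩ := subgrad g hg hmono hconvex x.2
    -- h := G - (g x - c * x) • e 0 - c • e 1 ≥ 0
    set h : CI := G - (g ↑x - c * ↑x) • e 0 - c • e 1 with hh
    have hpos' : ∀ y, 0 ≤ h y := by
      intro y
      have := hsub ↑y y.2
      simp only [hh, ContinuousMap.sub_apply, ContinuousMap.smul_apply, e,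
        ContinuousMap.coe_mk, smul_eq_mul, pow_zero, pow_one]
      rw [hGg y]
      nlinarith
    have hT := hpos h hpos' x
    have hTh : T h = T G - (g ↑x - c * ↑x) • e 0 - c • T (e 1) := by
      rw [hh, map_sub, map_sub, map_smul, map_smul, h0]
    rw [hTh] at hT
    simp only [ContinuousMap.sub_apply, ContinuousMap.smul_apply, e,
      ContinuousMap.coe_mk, smul_eq_mul, pow_zero, pow_one] at hT ⊢
    have h1x := h1 x
    simp only [e, ContinuousMap.coe_mk, pow_one] at h1x
    rw [hGg x]
    nlinarith [mul_le_mul_of_nonneg_left h1x hc0]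
  -- iter m G ≤ iter (m+1) G pointwise
  have step : ∀ m : ℕ, ∀ x : I01, iter T m G x ≤ iter T (m + 1) G x := by
    intro m
    induction m with
    | zero => intro x; simpa [iter] using key x
    | succ n ih =>
      intro x
      have : iter T (n + 1) G = T (iter T n G) := rfl
      have h2 : iter T (n + 2) G = T (iter T (n + 1) G) := rfl
      rw [this, h2]
      exact Tmono _ _ ih x
  -- pointwise upper bound by ‖G‖
  have bdd : ∀ m : ℕ, ∀ x : I01, iter T m G x ≤ ‖G‖ := by
    intro m
    induction m with
    | zero =>
      intro x
      simpa [iter] using (le_abs_self (G x)).trans (G.norm_coe_le_norm x)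
    | succ n ih =>
      intro x
      have hrw : iter T (n + 1) G = T (iter T n G) := rfl
      have hle : ∀ y, iter T n G y ≤ (‖G‖ • e 0) y := by
        intro y
        simpa [e, ContinuousMap.smul_apply] using ih y
      have := Tmono _ _ hle x
      rw [map_smul, h0] at this
      rw [hrw]
      simpa [e, ContinuousMap.smul_apply] using this
  intro x m
  refine ⟨?_, step m x, bdd (m + 1) x⟩
  induction m with
  | zero => simp [iter, hGg x]
  | succ n ih => exact le_trans ih (step n x)
end
end

section
/- Let T : C[0,1] → C[0,1] be a positive linear operator with T(e₀) = e₀ and T(e₁) ≥ e₁ (pointwise on [0,1]), and let g ∈ C[0,1] be twice continuously differentiable on [0,1]. Then for all m, p ∈ ℕ and all x ∈ [0,1] one has |T^{m+p}(g;x) − T^m(g;x)| ≤ (1/2)·‖g''‖·|T^{m+p}(e₂;x) − T^m(e₂;x)| + ‖g'‖·|T^m(e₁;x) − T^{m+p}(e₁;x)|, where ‖g'‖ and ‖g''‖ denote the sup norms of the first and second derivatives of g on [0,1]. -/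
open Filter

noncomputable section

/-- The sup norm `sup {|h x| : x ∈ [0,1]}` of a function on `[0,1]`. -/
def supAbsOn (h : ℝ → ℝ) : ℝ := sSup ((fun x => |h x|) '' I01)

/-!
Put `D f := T^{m+p} f x - T^m f x`, which is linear in `f`. If `f ≤ T f`, positivity makes
`m ↦ T^m f x` nondecreasing, so `D f ≥ 0`. This applies to every `f` that is convex with nonnegative
derivative on `[0,1]`: the difference between `f` and its tangent line at `s` is nonnegative, and
applying `T` to it and evaluating at `s` gives `f s ≤ T f s`, because `T e₀ = e₀`, `T e₁ ≥ e₁` and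
the tangent has nonnegative slope. With `M = ‖g''‖` and `N = ‖g'‖` the functions
`M/2 e₂ + N e₁ ∓ g`, `e₁` and `e₂` are of this kind, and `D (M/2 e₂ + N e₁ ∓ g) ≥ 0` is the claim.
-/

lemma le_supAbsOn {h : ℝ → ℝ} (hh : ContinuousOn h I01) {x : ℝ} (hx : x ∈ I01) :
    |h x| ≤ supAbsOn h :=
  le_csSup (isCompact_Icc.image_of_continuousOn hh.abs).bddAbove ⟨x, hx, rfl⟩

lemma supAbsOn_nonneg {h : ℝ → ℝ} (hh : ContinuousOn h I01) : 0 ≤ supAbsOn h :=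
  (abs_nonneg _).trans (le_supAbsOn hh (Set.left_mem_Icc.2 zero_le_one))

lemma ConvexOn.add_mul_sub_le_of_hasDerivWithinAt {S : Set ℝ} {f : ℝ → ℝ} {f' x y : ℝ}
    (hfc : ConvexOn ℝ S f) (hx : x ∈ S) (hy : y ∈ S) (hf' : HasDerivWithinAt f f' S x) :
    f x + f' * (y - x) ≤ f y := by
  rcases lt_trichotomy x y with hxy | rfl | hyx
  · have := hfc.le_slope_of_hasDerivWithinAt hx hy hxy hf'
    rw [slope_def_field, le_div_iff₀ (sub_pos.2 hxy)] at this
    linarith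
  · simp
  · have := hfc.slope_le_of_hasDerivWithinAt hy hx hyx hf'
    rw [slope_def_field, div_le_iff₀ (sub_pos.2 hyx)] at this
    linarith

lemma HasDerivWithinAt.half_mul_sq_add_mul_sub {g : ℝ → ℝ} {g'x M c x : ℝ} {s : Set ℝ}
    (hg : HasDerivWithinAt g g'x s x) :
    HasDerivWithinAt (fun x => M / 2 * x ^ 2 + c * x - g x) (M * x + c - g'x) s x :=
  ((((hasDerivAt_pow 2 x).const_mul (M / 2)).add
    ((hasDerivAt_id x).const_mul c)).hasDerivWithinAt.sub hg).congr_deriv (by ring)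

lemma convexOn_half_mul_sq_add_mul_sub {D : Set ℝ} (hD : Convex ℝ D) {g g' g'' : ℝ → ℝ}
    {M c : ℝ} (hd1 : ∀ x ∈ D, HasDerivWithinAt g (g' x) D x)
    (hd2 : ∀ x ∈ D, HasDerivWithinAt g' (g'' x) D x) (hM : ∀ x ∈ D, g'' x ≤ M) :
    ConvexOn ℝ D (fun x => M / 2 * x ^ 2 + c * x - g x) := by
  have hφ'' : ∀ x ∈ interior D, HasDerivWithinAt (fun x => M * x + c - g' x)
      (M - g'' x) (interior D) x := fun x hx =>
    ((((hasDerivAt_id x).const_mul M).add_const c).hasDerivWithinAt.sub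
      ((hd2 x (interior_subset hx)).mono interior_subset)).congr_deriv (by ring)
  refine convexOn_of_hasDerivWithinAt2_nonneg hD ?_
    (fun x hx => ((hd1 x (interior_subset hx)).mono interior_subset).half_mul_sq_add_mul_sub)
    hφ'' fun x hx => sub_nonneg.2 (hM x (interior_subset hx))
  exact (continuous_const.mul (continuous_pow 2) |>.add
    (continuous_const.mul continuous_id)).continuousOn.sub
    fun x hx => (hd1 x hx).continuousWithinAt

lemma iter_eq_pow (T : CI →ₗ[ℝ] CI) (m : ℕ) : iter T m = T ^ m := by
  induction m with
  | zero => rfl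
  | succ m ih => rw [iter, ih, pow_succ', Module.End.mul_eq_comp]

namespace IsPositive

variable {T : CI →ₗ[ℝ] CI}

lemma monotone (hT : IsPositive T) {f h : CI} (hfh : ∀ x, f x ≤ h x) (x : I01) :
    T f x ≤ T h x := by
  have := hT (h - f) (fun y => sub_nonneg.2 (hfh y)) x
  simpa [sub_nonneg] using this

lemma pow (hT : IsPositive T) (m : ℕ) : IsPositive (T ^ m) := by
  induction m with
  | zero => exact fun f hf => hf
  | succ m ih =>
    intro f hf x
    rw [pow_succ', Module.End.mul_apply]
    exact hT _ (ih f hf) x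

lemma iter_apply_monotone (hT : IsPositive T) {f : CI} (hf : ∀ x, f x ≤ T f x) (x : I01) :
    Monotone (fun m => iter T m f x) := by
  refine monotone_nat_of_le_succ fun m => ?_
  simp only [iter_eq_pow, pow_succ, Module.End.mul_apply]
  exact (hT.pow m).monotone hf x

variable (hT : IsPositive T) (h0 : T (e 0) = e 0) (h1 : ∀ x : I01, e 1 x ≤ T (e 1) x)
include hT h0 h1

lemma le_apply_of_tangent_le (u : CI) (a : I01 → ℝ) (ha : ∀ s, 0 ≤ a s)
    (htan : ∀ s t : I01, u s + a s * (t - s) ≤ u t) (s : I01) : u s ≤ T u s := by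
  have hF := hT (u - u s • e 0 - a s • (e 1 - (s : ℝ) • e 0))
    (fun t => by
      simp only [e, pow_zero, pow_one, ContinuousMap.sub_apply, ContinuousMap.coe_smul,
        ContinuousMap.coe_mk, Pi.smul_apply, smul_eq_mul, mul_one, ContinuousMap.coe_sub,
        Pi.sub_apply, sub_nonneg]
      linarith [htan s t]) s
  have he0 : e 0 s = 1 := by simp [e]
  have he1 : e 1 s = s := by simp [e]
  simp only [map_sub, map_smul, h0, ContinuousMap.sub_apply, ContinuousMap.smul_apply,
    smul_eq_mul, he0] at hF
  nlinarith [mul_nonneg (ha s) (sub_nonneg.2 (he1 ▸ h1 s))]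

lemma le_apply_of_convexOn (u : CI) {φ φ' : ℝ → ℝ} (hu : ∀ x : I01, u x = φ x)
    (hφ : ConvexOn ℝ I01 φ) (hφ' : ∀ x ∈ I01, HasDerivWithinAt φ (φ' x) I01 x)
    (hφ'0 : ∀ x ∈ I01, 0 ≤ φ' x) (s : I01) : u s ≤ T u s :=
  le_apply_of_tangent_le hT h0 h1 u (fun s => φ' s) (fun s => hφ'0 s s.2)
    (fun s t => by
      simpa only [hu] using hφ.add_mul_sub_le_of_hasDerivWithinAt s.2 t.2 (hφ' s s.2)) s

lemma e_two_le_apply (s : I01) : e 2 s ≤ T (e 2) s :=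
  le_apply_of_convexOn hT h0 h1 (e 2) (φ := fun x => x ^ 2) (fun _ => rfl)
    ((convexOn_pow 2).subset Set.Icc_subset_Ici_self (convex_Icc 0 1))
    (fun x _ => (hasDerivAt_pow 2 x).hasDerivWithinAt)
    (fun x hx => by simpa using hx.1) s

lemma le_apply_half_mul_sq_add_mul_sub (G : CI) {g g' g'' : ℝ → ℝ} {M N : ℝ}
    (hGg : ∀ x : I01, G x = g x) (hd1 : ∀ x ∈ I01, HasDerivWithinAt g (g' x) I01 x)
    (hd2 : ∀ x ∈ I01, HasDerivWithinAt g' (g'' x) I01 x) (hM : ∀ x ∈ I01, g'' x ≤ M)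
    (hM0 : 0 ≤ M) (hN : ∀ x ∈ I01, g' x ≤ N) (s : I01) :
    ((M / 2) • e 2 + N • e 1 - G) s ≤ T ((M / 2) • e 2 + N • e 1 - G) s :=
  le_apply_of_convexOn hT h0 h1 _ (φ := fun x => M / 2 * x ^ 2 + N * x - g x)
    (fun x => by simp [e, hGg])
    (convexOn_half_mul_sq_add_mul_sub (convex_Icc 0 1) hd1 hd2 hM)
    (fun x hx => (hd1 x hx).half_mul_sq_add_mul_sub)
    (fun x hx => by nlinarith [hN x hx, hx.1]) s

end IsPositive

theorem stmt13 (T : CI →ₗ[ℝ] CI) (hpos : IsPositive T)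
    (h0 : T (e 0) = e 0) (h1 : ∀ x : I01, e 1 x ≤ T (e 1) x)
    (g g' g'' : ℝ → ℝ) (G : CI) (hGg : ∀ x : I01, G x = g x)
    (hd1 : ∀ x ∈ I01, HasDerivWithinAt g (g' x) I01 x)
    (hd2 : ∀ x ∈ I01, HasDerivWithinAt g' (g'' x) I01 x)
    (hc : ContinuousOn g'' I01) :
    ∀ m p : ℕ, ∀ x : I01,
      |iter T (m + p) G x - iter T m G x| ≤
        (1 / 2) * supAbsOn g'' * |iter T (m + p) (e 2) x - iter T m (e 2) x|
        + supAbsOn g' * |iter T m (e 1) x - iter T (m + p) (e 1) x| := by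
  intro m p x
  have hg' : ContinuousOn g' I01 := fun y hy => (hd2 y hy).continuousWithinAt
  have hmono : ∀ f : CI, (∀ y, f y ≤ T f y) → iter T m f x ≤ iter T (m + p) f x :=
    fun f hf => hpos.iter_apply_monotone hf x (Nat.le_add_right m p)
  have hG := hmono _ (hpos.le_apply_half_mul_sq_add_mul_sub h0 h1 G hGg hd1 hd2
    (fun y hy => (le_abs_self _).trans (le_supAbsOn hc hy)) (supAbsOn_nonneg hc)
    (fun y hy => (le_abs_self _).trans (le_supAbsOn hg' hy)))
  have hnegG := hmono _ (hpos.le_apply_half_mul_sq_add_mul_sub h0 h1 (-G) (g := fun x => -g x)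
    (fun y => by simp [hGg]) (fun y hy => (hd1 y hy).neg) (fun y hy => (hd2 y hy).neg)
    (fun y hy => (neg_le_abs _).trans (le_supAbsOn hc hy)) (supAbsOn_nonneg hc)
    (fun y hy => (neg_le_abs _).trans (le_supAbsOn hg' hy)))
  have he1 := hmono _ h1
  have he2 := hmono _ (hpos.e_two_le_apply h0 h1)
  simp only [map_add, map_sub, map_neg, map_smul, ContinuousMap.add_apply,
    ContinuousMap.sub_apply, ContinuousMap.neg_apply, ContinuousMap.smul_apply,
    smul_eq_mul] at hG hnegG
  rw [abs_of_nonneg (sub_nonneg.2 he2), abs_of_nonpos (sub_nonpos.2 he1), abs_le]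
  constructor <;> linarith
end
end
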